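/- arXiv:2108.03776 — 3 statements merged into one kernel-verified Lean document; each statement's English description precedes it below -/
import Mathlib

section
/- Let n ∈ ℝ² be a unit vector and t = (n₂, −n₁) its rotation by −π/2. Let A⁺, A⁻ be real 2×2 matrices, q⁺, q⁻ ∈ ℝ and g ∈ ℝ². Assume σ(1, A⁺, q⁺) n − σ(1, A⁻, q⁻) n = g, A⁺ t = A⁻ t, and tr A⁺ = tr A⁻. Then ⟨n, (A⁺ − A⁻) n⟩ = 0, ⟨n, (A⁺ − A⁻) t⟩ = 0, ⟨t, (A⁺ − A⁻) n⟩ = ⟨g, t⟩, ⟨t, (A⁺ − A⁻) t⟩ = 0, and q⁺ − q⁻ = −⟨g, n⟩. -/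
/-!
Put `D = A⁺ − A⁻`. The tangential condition says `D t = 0`, and since `(n, t)` is an
orthonormal frame, `tr D = ⟨n, D n⟩ + ⟨t, D t⟩`, so the trace condition gives `⟨n, D n⟩ = 0`.
The stress jump is affine in `(A, q)`, so it reads `σ(1, D, q⁺ − q⁻) n = g`; its tangential
and normal components are `⟨t, D n⟩ = ⟨g, t⟩` and `2 ⟨n, D n⟩ − (q⁺ − q⁻) = ⟨g, n⟩`.
-/

open MeasureTheory

noncomputable section

namespace StokesIFE

/-- Euclidean inner product on `ℝ²`. -/
def dot (x y : Fin 2 → ℝ) : ℝ := x 0 * y 0 + x 1 * y 1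

/-- Euclidean length of a vector of `ℝ²`. -/
def len (x : Fin 2 → ℝ) : ℝ := Real.sqrt (dot x x)

/-- Strain tensor `ε(A) = (A + Aᵀ)/2`. -/
def eps (A : Matrix (Fin 2) (Fin 2) ℝ) : Matrix (Fin 2) (Fin 2) ℝ :=
  (2⁻¹ : ℝ) • (A + A.transpose)

/-- Cauchy stress tensor `σ(μ, A, q) = 2 μ ε(A) − q I₂`. -/
def sig (μ : ℝ) (A : Matrix (Fin 2) (Fin 2) ℝ) (q : ℝ) : Matrix (Fin 2) (Fin 2) ℝ :=
  (2 * μ) • eps A - q • (1 : Matrix (Fin 2) (Fin 2) ℝ)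

open Matrix

lemma dot_eq_dotProduct (x y : Fin 2 → ℝ) : dot x y = x ⬝ᵥ y := by
  simp [dot, dotProduct, Fin.sum_univ_two]

lemma sig_sub_sig (μ : ℝ) (A B : Matrix (Fin 2) (Fin 2) ℝ) (q r : ℝ) :
    sig μ A q - sig μ B r = sig μ (A - B) (q - r) := by
  simp only [sig, eps, transpose_sub]
  module

lemma dotProduct_sig_mulVec (μ : ℝ) (A : Matrix (Fin 2) (Fin 2) ℝ) (q : ℝ) (x y : Fin 2 → ℝ) :
    x ⬝ᵥ sig μ A q *ᵥ y = μ * (x ⬝ᵥ A *ᵥ y + y ⬝ᵥ A *ᵥ x) - q * (x ⬝ᵥ y) := by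
  have hAt : x ⬝ᵥ Aᵀ *ᵥ y = y ⬝ᵥ A *ᵥ x := by
    rw [dotProduct_mulVec, vecMul_transpose, dotProduct_comm]
  simp only [sig, eps, sub_mulVec, smul_mulVec, add_mulVec, one_mulVec, dotProduct_sub,
    dotProduct_smul, dotProduct_add, hAt, smul_eq_mul]
  ring

section Frame

variable {n t : Fin 2 → ℝ} (ht : t = ![n 1, -(n 0)])
include ht

lemma dotProduct_rot_self : t ⬝ᵥ n = 0 := by
  subst ht
  simp only [dotProduct, Fin.sum_univ_two, cons_val_zero, cons_val_one, cons_val_fin_one]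
  ring

lemma trace_eq_dotProduct_mulVec_add (hn : n ⬝ᵥ n = 1) (A : Matrix (Fin 2) (Fin 2) ℝ) :
    A.trace = n ⬝ᵥ A *ᵥ n + t ⬝ᵥ A *ᵥ t := by
  subst ht
  simp only [dotProduct, Fin.sum_univ_two, trace, diag_apply, mulVec, cons_val_zero,
    cons_val_one, cons_val_fin_one] at hn ⊢
  linear_combination (A 0 0 + A 1 1) * hn.symm

end Frame

/-- the jump identities satisfied by the Jacobians `A±` and pressures `q±`
of a piecewise-affine velocity / piecewise-constant pressure pair whose Cauchy stress jump
across a line with unit normal `n` equals `g`, whose tangential derivative jump vanishes,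
and whose divergence jump vanishes. -/
theorem statement0 (n : Fin 2 → ℝ) (hn : dot n n = 1)
    (t : Fin 2 → ℝ) (ht : t = ![n 1, -(n 0)])
    (Ap Am : Matrix (Fin 2) (Fin 2) ℝ) (qp qm : ℝ) (g : Fin 2 → ℝ)
    (hstress : (sig 1 Ap qp).mulVec n - (sig 1 Am qm).mulVec n = g)
    (htang : Ap.mulVec t = Am.mulVec t)
    (htr : Ap.trace = Am.trace) :
    dot n ((Ap - Am).mulVec n) = 0 ∧
    dot n ((Ap - Am).mulVec t) = 0 ∧
    dot t ((Ap - Am).mulVec n) = dot g t ∧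
    dot t ((Ap - Am).mulVec t) = 0 ∧
    qp - qm = -(dot g n) := by
  simp only [dot_eq_dotProduct] at hn ⊢
  set D := Ap - Am
  have hDt : D *ᵥ t = 0 := by rw [sub_mulVec, htang, sub_self]
  have hjump : sig 1 D (qp - qm) *ᵥ n = g := by rw [← sig_sub_sig, sub_mulVec, hstress]
  have hnDn : n ⬝ᵥ D *ᵥ n = 0 := by
    have htrD : D.trace = 0 := by rw [trace_sub, htr, sub_self]
    rwa [trace_eq_dotProduct_mulVec_add ht hn, hDt, dotProduct_zero, add_zero] at htrD
  have htn := dotProduct_rot_self ht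
  have htg := dotProduct_sig_mulVec 1 D (qp - qm) t n
  have hng := dotProduct_sig_mulVec 1 D (qp - qm) n n
  rw [hjump, hDt, dotProduct_zero, htn] at htg
  rw [hjump, hnDn, hn] at hng
  refine ⟨hnDn, by rw [hDt, dotProduct_zero], ?_, by rw [hDt, dotProduct_zero], ?_⟩
  · rw [dotProduct_comm g, htg]
    ring
  · rw [dotProduct_comm g, hng]
    ring

end StokesIFE
end
end

section
/- Let T be an arbitrary triangle cut by the segment [D,E] as in the setup, and let w : ℝ² → ℝ be defined by w(x) = max(⟨n, x − D⟩, 0), so that w equals ⟨n, x − D⟩ on T⁺ and 0 on T⁻. Let L = π w be the Crouzeix–Raviart interpolant of w on T. Then ⟨∇L, n⟩ = |T⁺| / |T|, the area fraction of the subtriangle T⁺, where ∇L ∈ ℝ² is the constant gradient of the affine map L. -/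
/-! Write `D = ad A₂ + (1 - ad) A₃` and `E = ae A₁ + (1 - ae) A₃` with `ad, ae ∈ (0, 1)`, and
`αᵢ = ⟨n, Aᵢ - D⟩`, so that `α₁, α₂ < 0 < α₃`. Along each edge `w` is the positive part of an
affine function, so its edge means are explicit: `ad α₃ / 2` on `e₁`, `ae α₃ / 2` on `e₂` and `0`
on `e₃`. The mean of an affine map over a segment is its value at the midpoint, so the three
Crouzeix–Raviart conditions determine `⟨∇L, Aᵢ - A₃⟩` for `i = 1, 2`; they agree with those of
`ad ae n`, hence `∇L = ad ae n` and `⟨∇L, n⟩ = ad ae`. On the other hand `T⁺ = conv{E, D, A₃}`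
is the image of `T` under the affine map fixing `A₃` with determinant `ad ae`, so
`|T⁺| = ad ae |T|`. -/

open MeasureTheory

noncomputable section

namespace StokesIFE

/-- Mean value of `u` over the segment `[P, Q]` with respect to arclength,
expressed through the affine parametrization of the segment. -/
def edgeMean (P Q : Fin 2 → ℝ) (u : (Fin 2 → ℝ) → ℝ) : ℝ :=
  ∫ s in (0:ℝ)..1, u (P + s • (Q - P))

/-- Two-dimensional Lebesgue area of a subset of `ℝ²`. -/
def area (s : Set (Fin 2 → ℝ)) : ℝ := (volume s).toReal

/-- Squared Frobenius norm of a 2×2 matrix. -/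
def frobSq (A : Matrix (Fin 2) (Fin 2) ℝ) : ℝ := ∑ i : Fin 2, ∑ j : Fin 2, (A i j) ^ 2

/-- A triangle `T = conv{A₁, A₂, A₃}` cut by the segment `[D, E]`, where
`D` lies in the open edge `(A₂, A₃)`, `E` lies in the open edge `(A₁, A₃)`,
and `n` is the unit normal of `E − D` pointing towards `A₃`. -/
structure CutTriangle where
  A₁ : Fin 2 → ℝ
  A₂ : Fin 2 → ℝ
  A₃ : Fin 2 → ℝ
  D : Fin 2 → ℝ
  E : Fin 2 → ℝ
  n : Fin 2 → ℝ
  indep : AffineIndependent ℝ ![A₁, A₂, A₃]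
  hD : D ∈ openSegment ℝ A₂ A₃
  hE : E ∈ openSegment ℝ A₁ A₃
  hn_unit : dot n n = 1
  hn_orth : dot n (E - D) = 0
  hn_sign : 0 < dot n (A₃ - D)

namespace CutTriangle

variable (c : CutTriangle)

/-- Tangent vector `t = (n₂, −n₁)`, the rotation of `n` by `−π/2`. -/
def t : Fin 2 → ℝ := ![c.n 1, -(c.n 0)]

/-- The closed triangle. -/
def T : Set (Fin 2 → ℝ) := convexHull ℝ {c.A₁, c.A₂, c.A₃}

/-- The part of the triangle on the `+` side of the cut. -/
def Tplus : Set (Fin 2 → ℝ) := c.T ∩ {x | 0 ≤ dot c.n (x - c.D)}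

/-- The part of the triangle on the `−` side of the cut. -/
def Tminus : Set (Fin 2 → ℝ) := c.T ∩ {x | dot c.n (x - c.D) ≤ 0}

/-- The piecewise linear function `w(x) = max(⟨n, x − D⟩, 0)`. -/
def w (x : Fin 2 → ℝ) : ℝ := max (dot c.n (x - c.D)) 0

/-- `(g, b)` represents the Crouzeix–Raviart interpolant `x ↦ ⟨g, x⟩ + b` of `u` on `T`:
an affine map whose mean value over each of the three edges coincides with that of `u`. -/
def IsCR (u : (Fin 2 → ℝ) → ℝ) (g : Fin 2 → ℝ) (b : ℝ) : Prop :=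
  edgeMean c.A₂ c.A₃ (fun x => dot g x + b) = edgeMean c.A₂ c.A₃ u ∧
  edgeMean c.A₁ c.A₃ (fun x => dot g x + b) = edgeMean c.A₁ c.A₃ u ∧
  edgeMean c.A₁ c.A₂ (fun x => dot g x + b) = edgeMean c.A₁ c.A₂ u

/-- The componentwise Crouzeix–Raviart interpolant `x ↦ Mπ x + bπ` of a vector-valued `u`. -/
def IsCRvec (u : (Fin 2 → ℝ) → Fin 2 → ℝ) (Mπ : Matrix (Fin 2) (Fin 2) ℝ)
    (bπ : Fin 2 → ℝ) : Prop :=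
  ∀ j : Fin 2, c.IsCR (fun x => u x j) (Mπ j) (bπ j)

/-- The piecewise velocity: `x ↦ Mp x + bp` on the `+` side and `x ↦ Mm x + bm`
on the `−` side. -/
def vtilde (Mp : Matrix (Fin 2) (Fin 2) ℝ) (bp : Fin 2 → ℝ)
    (Mm : Matrix (Fin 2) (Fin 2) ℝ) (bm : Fin 2 → ℝ) (x : Fin 2 → ℝ) : Fin 2 → ℝ :=
  if 0 ≤ dot c.n (x - c.D) then Mp.mulVec x + bp else Mm.mulVec x + bm

/-- The seven local degrees of freedom: edge means of the two velocity components over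
the edges `e₁ = [A₂,A₃]`, `e₂ = [A₁,A₃]`, `e₃ = [A₁,A₂]`, and the mean of the
piecewise-constant pressure over `T`. -/
def dof (Mp : Matrix (Fin 2) (Fin 2) ℝ) (bp : Fin 2 → ℝ)
    (Mm : Matrix (Fin 2) (Fin 2) ℝ) (bm : Fin 2 → ℝ) (qp qm : ℝ) : Fin 7 → ℝ :=
  ![edgeMean c.A₂ c.A₃ (fun x => c.vtilde Mp bp Mm bm x 0),
    edgeMean c.A₁ c.A₃ (fun x => c.vtilde Mp bp Mm bm x 0),
    edgeMean c.A₁ c.A₂ (fun x => c.vtilde Mp bp Mm bm x 0),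
    edgeMean c.A₂ c.A₃ (fun x => c.vtilde Mp bp Mm bm x 1),
    edgeMean c.A₁ c.A₃ (fun x => c.vtilde Mp bp Mm bm x 1),
    edgeMean c.A₁ c.A₂ (fun x => c.vtilde Mp bp Mm bm x 1),
    (area c.Tplus * qp + area c.Tminus * qm) / area c.T]

/-- A local IFE pair: affine velocities `v± = Mp/Mm · x + bp/bm` and constant pressures
`q±` satisfying the stress-jump condition (J1), continuity of the velocity on `[D,E]` (J2)
and continuity of the divergence (J3). -/
def IsIFEPair (μp μm : ℝ) (Mp : Matrix (Fin 2) (Fin 2) ℝ) (bp : Fin 2 → ℝ)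
    (Mm : Matrix (Fin 2) (Fin 2) ℝ) (bm : Fin 2 → ℝ) (qp qm : ℝ) : Prop :=
  (sig μp Mp qp).mulVec c.n = (sig μm Mm qm).mulVec c.n ∧
  (∀ x ∈ segment ℝ c.D c.E, Mp.mulVec x + bp = Mm.mulVec x + bm) ∧
  Mp.trace = Mm.trace

/-- The diameter of the triangle (its longest edge). -/
def hT : ℝ := max (len (c.A₂ - c.A₁)) (max (len (c.A₃ - c.A₁)) (len (c.A₃ - c.A₂)))

/-- The perimeter of the triangle. -/
def perim : ℝ := len (c.A₂ - c.A₁) + len (c.A₃ - c.A₁) + len (c.A₃ - c.A₂)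

/-- The inradius of the triangle, `r_T = 2|T| / perimeter`. -/
def rT : ℝ := 2 * area c.T / c.perim

/-- `ϱ`-shape-regularity: `h_T ≤ ϱ r_T`. -/
def ShapeReg (ϱ : ℝ) : Prop := c.hT ≤ ϱ * c.rT

/-- Arclength of the part of the edge `[P,Q]` lying on the `+` side of the cut. -/
def edgeLenPlus (P Q : Fin 2 → ℝ) : ℝ :=
  len (Q - P) *
    (volume {s : ℝ | s ∈ Set.Icc (0:ℝ) 1 ∧ 0 ≤ dot c.n (P + s • (Q - P) - c.D)}).toReal

/-- Arclength of the part of the edge `[P,Q]` lying on the `−` side of the cut. -/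
def edgeLenMinus (P Q : Fin 2 → ℝ) : ℝ :=
  len (Q - P) *
    (volume {s : ℝ | s ∈ Set.Icc (0:ℝ) 1 ∧ dot c.n (P + s • (Q - P) - c.D) ≤ 0}).toReal

/-- Total arclength of `∂T ∩ T⁺`. -/
def bdryLenPlus : ℝ :=
  c.edgeLenPlus c.A₂ c.A₃ + c.edgeLenPlus c.A₁ c.A₃ + c.edgeLenPlus c.A₁ c.A₂

/-- Total arclength of `∂T ∩ T⁻`. -/
def bdryLenMinus : ℝ :=
  c.edgeLenMinus c.A₂ c.A₃ + c.edgeLenMinus c.A₁ c.A₃ + c.edgeLenMinus c.A₁ c.A₂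

end CutTriangle

lemma dot_add_right (x y z : Fin 2 → ℝ) : dot x (y + z) = dot x y + dot x z := by
  simp only [dot, Pi.add_apply]; ring

lemma dot_sub_right (x y z : Fin 2 → ℝ) : dot x (y - z) = dot x y - dot x z := by
  simp only [dot, Pi.sub_apply]; ring

lemma dot_smul_right (r : ℝ) (x y : Fin 2 → ℝ) : dot x (r • y) = r * dot x y := by
  simp only [dot, Pi.smul_apply, smul_eq_mul]; ring

lemma dot_smul_left (r : ℝ) (x y : Fin 2 → ℝ) : dot (r • x) y = r * dot x y := by
  simp only [dot, Pi.smul_apply, smul_eq_mul]; ring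

lemma dot_smul_add_smul_sub {n P Q X : Fin 2 → ℝ} {a b : ℝ} (hab : a + b = 1) :
    dot n (a • P + b • Q - X) = a * dot n (P - X) + b * dot n (Q - X) := by
  simp only [dot_sub_right, dot_add_right, dot_smul_right]
  linear_combination dot n X * hab

lemma dot_smul_add_smul_add_smul_sub {n P Q R X : Fin 2 → ℝ} {a b c : ℝ} (habc : a + b + c = 1) :
    dot n (a • P + b • Q + c • R - X) =
      a * dot n (P - X) + b * dot n (Q - X) + c * dot n (R - X) := by
  simp only [dot_sub_right, dot_add_right, dot_smul_right]
  linear_combination dot n X * habc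

def cross (u v : Fin 2 → ℝ) : ℝ := u 0 * v 1 - u 1 * v 0

lemma cross_smul_smul (a b : ℝ) (u v : Fin 2 → ℝ) : cross (a • u) (b • v) = a * b * cross u v := by
  simp only [cross, Pi.smul_apply, smul_eq_mul]; ring

lemma eq_smul_of_dot_eq {g n u v : Fin 2 → ℝ} {k : ℝ} (hu : dot g u = k * dot n u)
    (hv : dot g v = k * dot n v) (huv : cross u v ≠ 0) : g = k • n := by
  simp only [dot, cross] at hu hv huv
  ext i
  fin_cases i
  · show g 0 = k * n 0
    exact mul_left_cancel₀ huv (by linear_combination v 1 * hu - u 1 * hv)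
  · show g 1 = k * n 1
    exact mul_left_cancel₀ huv (by linear_combination u 0 * hv - v 0 * hu)

theorem mem_convexHull_triple {𝕜 E : Type*} [Field 𝕜] [LinearOrder 𝕜] [IsStrictOrderedRing 𝕜]
    [AddCommGroup E] [Module 𝕜 E] {P Q R x : E} :
    x ∈ convexHull 𝕜 {P, Q, R} ↔
      ∃ a b c : 𝕜, 0 ≤ a ∧ 0 ≤ b ∧ 0 ≤ c ∧ a + b + c = 1 ∧ a • P + b • Q + c • R = x := by
  constructor
  · rw [convexHull_insert (Set.insert_nonempty _ _), convexHull_pair, mem_convexJoin]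
    rintro ⟨_, rfl, y, ⟨b, c, hb, hc, hbc, rfl⟩, a, t, ha, ht, hat, rfl⟩
    exact ⟨a, t * b, t * c, ha, by positivity, by positivity, by linear_combination t * hbc + hat,
      by module⟩
  · rintro ⟨a, b, c, ha, hb, hc, habc, rfl⟩
    refine mem_convexHull_of_exists_fintype ![a, b, c] ![P, Q, R] ?_ ?_ ?_ ?_
    · intro i; fin_cases i <;> assumption
    · simpa [Fin.sum_univ_three] using habc
    · intro i; fin_cases i <;> simp
    · simp [Fin.sum_univ_three]

theorem AffineIndependent.measure_convexHull_range_pos {ι E : Type*} [Fintype ι]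
    [NormedAddCommGroup E] [NormedSpace ℝ E] [FiniteDimensional ℝ E] [MeasurableSpace E]
    (μ : Measure E) [μ.IsOpenPosMeasure] {p : ι → E} (hp : AffineIndependent ℝ p)
    (hcard : Fintype.card ι = Module.finrank ℝ E + 1) :
    0 < μ (convexHull ℝ (Set.range p)) := by
  refine Measure.measure_pos_of_nonempty_interior μ ?_
  rw [(convex_convexHull ℝ _).interior_nonempty_iff_affineSpan_eq_top, affineSpan_convexHull]
  exact hp.affineSpan_eq_top_iff_card_eq_finrank_add_one.mpr hcard

def unitTriangle : Set (Fin 2 → ℝ) := convexHull ℝ {Pi.single 0 1, Pi.single 1 1, 0}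

open scoped Pointwise in
theorem volume_convexHull_triple (P₁ P₂ P₃ : Fin 2 → ℝ) :
    volume (convexHull ℝ {P₁, P₂, P₃}) =
      ENNReal.ofReal |cross (P₁ - P₃) (P₂ - P₃)| * volume unitTriangle := by
  set u := P₁ - P₃
  set v := P₂ - P₃
  let B : Matrix (Fin 2) (Fin 2) ℝ := !![u 0, v 0; u 1, v 1]
  have hB : Matrix.toLin' B '' {Pi.single 0 1, Pi.single 1 1, 0} = {u, v, 0} := by
    simp only [Set.image_insert_eq, Set.image_singleton, Matrix.toLin'_apply,
      Matrix.mulVec_single_one, map_zero]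
    congr 2 <;> ext i <;> fin_cases i <;> rfl
  have hvadd : ({P₁, P₂, P₃} : Set (Fin 2 → ℝ)) = P₃ +ᵥ ({u, v, 0} : Set (Fin 2 → ℝ)) := by
    simp [Set.vadd_set_insert, u, v]
  rw [hvadd, convexHull_vadd, measure_vadd, ← hB, ← LinearMap.image_convexHull,
    Measure.addHaar_image_linearMap, LinearMap.det_toLin', Matrix.det_fin_two_of, cross,
    mul_comm (v 0)]
  rfl

theorem integral_max_zero_of_nonpos {a b : ℝ} (ha : a ≤ 0) (hb : b ≤ 0) :
    ∫ x in a..b, max x 0 = 0 := by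
  refine (intervalIntegral.integral_congr (g := fun _ => 0) fun x hx => ?_).trans (by simp)
  exact max_eq_right ((Set.mem_uIcc.mp hx).elim (fun h => h.2.trans hb) fun h => h.2.trans ha)

theorem integral_max_zero_of_nonpos_of_nonneg {a b : ℝ} (ha : a ≤ 0) (hb : 0 ≤ b) :
    ∫ x in a..b, max x 0 = b ^ 2 / 2 := by
  have hcont : Continuous fun x : ℝ => max x 0 := continuous_id.max continuous_const
  rw [← intervalIntegral.integral_add_adjacent_intervals (b := 0) (hcont.intervalIntegrable _ _)
    (hcont.intervalIntegrable _ _), integral_max_zero_of_nonpos ha le_rfl, zero_add]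
  have hid : ∫ x in (0:ℝ)..b, max x 0 = ∫ x in (0:ℝ)..b, x :=
    intervalIntegral.integral_congr fun x hx => by
      rw [Set.uIcc_of_le hb] at hx; exact max_eq_left hx.1
  rw [hid, integral_id]
  ring

theorem integral_unitInterval_max_affine {a b : ℝ} (ha : a ≤ 0) (hb : 0 < b) :
    ∫ s in (0:ℝ)..1, max (a + s * (b - a)) 0 = b ^ 2 / (2 * (b - a)) := by
  have hba : b - a ≠ 0 := by linarith
  simp_rw [mul_comm _ (b - a)]
  rw [intervalIntegral.integral_comp_add_mul (fun x => max x 0) hba, mul_zero, mul_one, add_zero,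
    add_sub_cancel, integral_max_zero_of_nonpos_of_nonneg ha hb.le, smul_eq_mul]
  field_simp

theorem integral_unitInterval_max_affine_of_nonpos {a b : ℝ} (ha : a ≤ 0) (hb : b ≤ 0) :
    ∫ s in (0:ℝ)..1, max (a + s * (b - a)) 0 = 0 := by
  refine (intervalIntegral.integral_congr (g := fun _ => 0) fun s hs => max_eq_right ?_).trans
    (by simp)
  rw [Set.uIcc_of_le zero_le_one] at hs
  nlinarith [hs.1, hs.2]

lemma edgeMean_affine (P Q g : Fin 2 → ℝ) (b : ℝ) :
    edgeMean P Q (fun x => dot g x + b) = (dot g P + dot g Q) / 2 + b := by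
  have h (s : ℝ) : dot g (P + s • (Q - P)) + b = (dot g P + b) + (dot g Q - dot g P) * s := by
    simp only [dot_add_right, dot_smul_right, dot_sub_right]; ring
  simp only [edgeMean, h]
  rw [intervalIntegral.integral_add intervalIntegrable_const
    (Continuous.intervalIntegrable (by fun_prop) _ _), intervalIntegral.integral_const_mul,
    integral_id, intervalIntegral.integral_const, smul_eq_mul]
  ring

lemma edgeMean_max_dot_sub (n D P Q : Fin 2 → ℝ) :
    edgeMean P Q (fun x => max (dot n (x - D)) 0) =
      ∫ s in (0:ℝ)..1, max (dot n (P - D) + s * (dot n (Q - D) - dot n (P - D))) 0 := by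
  have h (s : ℝ) : dot n (P + s • (Q - P) - D) =
      dot n (P - D) + s * (dot n (Q - D) - dot n (P - D)) := by
    simp only [dot_add_right, dot_smul_right, dot_sub_right]; ring
  simp only [edgeMean, h]

lemma convex_setOf_nonneg_dot_sub (n D : Fin 2 → ℝ) :
    Convex ℝ {x : Fin 2 → ℝ | 0 ≤ dot n (x - D)} := by
  intro x hx y hy a b ha hb hab
  simp only [Set.mem_ofPred_eq, dot_smul_add_smul_sub hab] at *
  positivity

lemma mul_dot_sub_add_mul_dot_sub_eq_zero {n D P Q X : Fin 2 → ℝ} {a b : ℝ} (hab : a + b = 1)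
    (hX : a • P + b • Q = X) (hXD : dot n (X - D) = 0) :
    a * dot n (P - D) + b * dot n (Q - D) = 0 := by
  rw [← dot_smul_add_smul_sub hab, hX, hXD]

lemma dot_sub_neg_of_cut {n D P Q X : Fin 2 → ℝ} {a b : ℝ} (ha : 0 < a) (hb : 0 < b)
    (hab : a + b = 1) (hX : a • P + b • Q = X) (hXD : dot n (X - D) = 0)
    (hQ : 0 < dot n (Q - D)) : dot n (P - D) < 0 := by
  nlinarith [mul_dot_sub_add_mul_dot_sub_eq_zero hab hX hXD]

lemma edgeMean_max_dot_sub_of_cut {n D P Q X : Fin 2 → ℝ} {a b : ℝ} (ha : 0 < a) (hb : 0 < b)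
    (hab : a + b = 1) (hX : a • P + b • Q = X) (hXD : dot n (X - D) = 0)
    (hQ : 0 < dot n (Q - D)) :
    edgeMean P Q (fun x => max (dot n (x - D)) 0) = a * dot n (Q - D) / 2 := by
  have hP := dot_sub_neg_of_cut ha hb hab hX hXD hQ
  have hk : a * (dot n (Q - D) - dot n (P - D)) = dot n (Q - D) := by
    linear_combination -(mul_dot_sub_add_mul_dot_sub_eq_zero hab hX hXD) + dot n (Q - D) * hab
  rw [edgeMean_max_dot_sub, integral_unitInterval_max_affine hP.le hQ,
    div_eq_div_iff (by nlinarith) two_ne_zero]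
  linear_combination (-2 * dot n (Q - D)) * hk

lemma edgeMean_max_dot_sub_of_nonpos {n D P Q : Fin 2 → ℝ} (hP : dot n (P - D) ≤ 0)
    (hQ : dot n (Q - D) ≤ 0) : edgeMean P Q (fun x => max (dot n (x - D)) 0) = 0 := by
  rw [edgeMean_max_dot_sub, integral_unitInterval_max_affine_of_nonpos hP hQ]

namespace CutTriangle

variable (c : CutTriangle)

theorem Tplus_eq : c.Tplus = convexHull ℝ {c.E, c.D, c.A₃} := by
  obtain ⟨ad, d, had, -, hd1, hD⟩ := c.hD
  obtain ⟨ae, e, hae, -, he1, hE⟩ := c.hE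
  apply Set.Subset.antisymm
  · rintro _ ⟨hxT, hxH⟩
    obtain ⟨l₁, l₂, l₃, h₁, h₂, -, hl, rfl⟩ := mem_convexHull_triple.mp hxT
    obtain rfl : l₃ = 1 - l₁ - l₂ := by linarith
    obtain rfl : d = 1 - ad := by linarith
    obtain rfl : e = 1 - ae := by linarith
    have hx : l₁ • c.A₁ + l₂ • c.A₂ + (1 - l₁ - l₂) • c.A₃ =
        (l₁ / ae) • c.E + (l₂ / ad) • c.D + (1 - l₁ / ae - l₂ / ad) • c.A₃ := by
      rw [← hE, ← hD]
      match_scalars <;> field_simp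
      ring
    have hsum : l₁ / ae + l₂ / ad + (1 - l₁ / ae - l₂ / ad) = 1 := by ring
    rw [Set.mem_ofPred_eq, hx, dot_smul_add_smul_add_smul_sub hsum, c.hn_orth, sub_self] at hxH
    have hμ : 0 ≤ 1 - l₁ / ae - l₂ / ad :=
      nonneg_of_mul_nonneg_left (by simpa [dot] using hxH) c.hn_sign
    rw [hx]
    exact mem_convexHull_triple.mpr ⟨_, _, _, by positivity, by positivity, hμ, hsum, rfl⟩
  · refine convexHull_min ?_ ((convex_convexHull ℝ _).inter (convex_setOf_nonneg_dot_sub _ _))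
    have hT : ∀ {P Q}, P ∈ ({c.A₁, c.A₂, c.A₃} : Set _) → Q ∈ ({c.A₁, c.A₂, c.A₃} : Set _) →
        openSegment ℝ P Q ⊆ c.T := fun hP hQ =>
      (openSegment_subset_segment ℝ _ _).trans (segment_subset_convexHull hP hQ)
    rintro _ (rfl | rfl | rfl)
    · exact ⟨hT (by simp) (by simp) c.hE, c.hn_orth.ge⟩
    · exact ⟨hT (by simp) (by simp) c.hD, by simp [dot]⟩
    · exact ⟨subset_convexHull ℝ _ (by simp), c.hn_sign.le⟩

theorem volume_T_pos : 0 < volume c.T := by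
  have h := AffineIndependent.measure_convexHull_range_pos volume c.indep (by simp)
  have hrange : Set.range ![c.A₁, c.A₂, c.A₃] = {c.A₁, c.A₂, c.A₃} := by
    ext; simp; tauto
  rwa [hrange] at h

theorem area_T_ne_zero : area c.T ≠ 0 :=
  (ENNReal.toReal_pos c.volume_T_pos.ne'
    ((Set.toFinite _).isCompact_convexHull (𝕜 := ℝ)).measure_lt_top.ne).ne'

theorem cross_ne_zero : cross (c.A₁ - c.A₃) (c.A₂ - c.A₃) ≠ 0 := by
  intro h
  have hpos := c.volume_T_pos
  rw [T, volume_convexHull_triple, h] at hpos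
  simp at hpos

theorem area_Tplus_eq {ad d ae e : ℝ} (had : 0 ≤ ad) (hd1 : ad + d = 1)
    (hD : ad • c.A₂ + d • c.A₃ = c.D) (hae : 0 ≤ ae) (he1 : ae + e = 1)
    (hE : ae • c.A₁ + e • c.A₃ = c.E) : area c.Tplus = ae * ad * area c.T := by
  have hD' : c.D - c.A₃ = ad • (c.A₂ - c.A₃) := by
    rw [← hD, show d = 1 - ad by linarith]; module
  have hE' : c.E - c.A₃ = ae • (c.A₁ - c.A₃) := by
    rw [← hE, show e = 1 - ae by linarith]; module
  rw [area, area, Tplus_eq, T, volume_convexHull_triple, volume_convexHull_triple, hD', hE',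
    cross_smul_smul, abs_mul, abs_of_nonneg (mul_nonneg hae had), ENNReal.ofReal_mul
    (mul_nonneg hae had), mul_assoc, ENNReal.toReal_mul, ENNReal.toReal_ofReal (mul_nonneg hae had)]

theorem dot_n_eq_of_isCR_w {g : Fin 2 → ℝ} {b ad d ae e : ℝ} (hL : c.IsCR c.w g b)
    (had : 0 < ad) (hd : 0 < d) (hd1 : ad + d = 1) (hD : ad • c.A₂ + d • c.A₃ = c.D)
    (hae : 0 < ae) (he : 0 < e) (he1 : ae + e = 1) (hE : ae • c.A₁ + e • c.A₃ = c.E) :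
    dot g c.n = ad * ae := by
  have hDD : dot c.n (c.D - c.D) = 0 := by simp [dot]
  have hα₁ := dot_sub_neg_of_cut hae he he1 hE c.hn_orth c.hn_sign
  have hα₂ := dot_sub_neg_of_cut had hd hd1 hD hDD c.hn_sign
  obtain ⟨h₁, h₂, h₃⟩ := hL
  unfold w at h₁ h₂ h₃
  rw [edgeMean_affine, edgeMean_max_dot_sub_of_cut had hd hd1 hD hDD c.hn_sign] at h₁
  rw [edgeMean_affine, edgeMean_max_dot_sub_of_cut hae he he1 hE c.hn_orth c.hn_sign] at h₂
  rw [edgeMean_affine, edgeMean_max_dot_sub_of_nonpos hα₁.le hα₂.le] at h₃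
  have hsub (P : Fin 2 → ℝ) : dot c.n (P - c.A₃) = dot c.n (P - c.D) - dot c.n (c.A₃ - c.D) := by
    simp only [dot_sub_right]; ring
  have hu : dot g (c.A₁ - c.A₃) = ad * ae * dot c.n (c.A₁ - c.A₃) := by
    rw [dot_sub_right, hsub]
    linear_combination 2 * h₃ - 2 * h₁ - ad * mul_dot_sub_add_mul_dot_sub_eq_zero he1 hE c.hn_orth
      + ad * dot c.n (c.A₃ - c.D) * he1
  have hv : dot g (c.A₂ - c.A₃) = ad * ae * dot c.n (c.A₂ - c.A₃) := by
    rw [dot_sub_right, hsub]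
    linear_combination 2 * h₃ - 2 * h₂ - ae * mul_dot_sub_add_mul_dot_sub_eq_zero hd1 hD hDD
      + ae * dot c.n (c.A₃ - c.D) * hd1
  rw [eq_smul_of_dot_eq hu hv c.cross_ne_zero, dot_smul_left, c.hn_unit, mul_one]

end CutTriangle

/-- if `L = π w` is the Crouzeix–Raviart interpolant (represented by
`L x = ⟨g, x⟩ + b`) of `w(x) = max(⟨n, x − D⟩, 0)` on an arbitrary cut triangle,
then `⟨∇L, n⟩ = |T⁺| / |T|`. -/
theorem statement3 (c : CutTriangle) (g : Fin 2 → ℝ) (b : ℝ)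
    (hL : c.IsCR c.w g b) :
    dot g c.n = area c.Tplus / area c.T := by
  obtain ⟨ad, d, had, hd, hd1, hD⟩ := c.hD
  obtain ⟨ae, e, hae, he, he1, hE⟩ := c.hE
  rw [c.area_Tplus_eq had.le hd1 hD hae.le he1 hE, mul_div_cancel_right₀ _ c.area_T_ne_zero,
    c.dot_n_eq_of_isCR_w hL had hd hd1 hD hae he he1 hE, mul_comm]

end StokesIFE
end
end

section
/- Let μ⁺, μ⁻ > 0 and let (v⁺, v⁻, q⁺, q⁻) be a local IFE pair on an arbitrary cut triangle (T, D, E) as in the setup. If all seven degrees of freedom vanish, N₁ = ⋯ = N₇ = 0, then v⁺ = v⁻ = 0 and q⁺ = q⁻ = 0. -/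
open MeasureTheory

noncomputable section

namespace StokesIFE

/-! ### Auxiliary lemmas for `statement6` -/

open intervalIntegral in
private lemma integral_affine' (a b : ℝ) : (∫ s in (0:ℝ)..1, (a + s * b)) = a + b / 2 := by
  have h1 : IntervalIntegrable (fun s : ℝ => s * b) volume 0 1 :=
    (continuous_id.mul continuous_const).intervalIntegrable _ _
  rw [integral_add intervalIntegrable_const h1, intervalIntegral.integral_mul_const, integral_id]
  norm_num
  ring

open intervalIntegral in
private lemma integral_max_nonpos' {p q : ℝ} (hp : p ≤ 0) (hq : q ≤ 0) :
    (∫ s in (0:ℝ)..1, max (p + s * (q - p)) 0) = 0 := by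
  rw [show (∫ s in (0:ℝ)..1, max (p + s * (q - p)) 0) = ∫ s in (0:ℝ)..1, (0:ℝ) from
    integral_congr ?_]
  · simp
  · intro s hs
    rw [Set.uIcc_of_le (by norm_num : (0:ℝ) ≤ 1)] at hs
    have h0 := hs.1
    have h1 := hs.2
    have hx : p + s * (q - p) ≤ 0 := by nlinarith
    simpa using max_eq_right hx

open intervalIntegral in
private lemma integral_max_cross' {p q : ℝ} (hp : p < 0) (hq : 0 < q) :
    (∫ s in (0:ℝ)..1, max (p + s * (q - p)) 0) = q ^ 2 / (2 * (q - p)) := by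
  have hqp : 0 < q - p := by linarith
  set s₀ : ℝ := -p / (q - p) with hs₀
  have hs₀0 : 0 < s₀ := div_pos (by linarith) hqp
  have hs₀1 : s₀ < 1 := by rw [hs₀, div_lt_one hqp]; linarith
  have hcont : Continuous fun s : ℝ => max (p + s * (q - p)) 0 :=
    (continuous_const.add (continuous_id.mul continuous_const)).max continuous_const
  have hint : ∀ a b : ℝ, IntervalIntegrable (fun s => max (p + s*(q-p)) 0) volume a b :=
    fun a b => hcont.intervalIntegrable a b
  have hsplit : (∫ s in (0:ℝ)..1, max (p + s * (q - p)) 0)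
      = (∫ s in (0:ℝ)..s₀, max (p + s * (q - p)) 0) + ∫ s in s₀..1, max (p + s * (q - p)) 0 :=
    (integral_add_adjacent_intervals (hint _ _) (hint _ _)).symm
  have h1 : (∫ s in (0:ℝ)..s₀, max (p + s * (q - p)) 0) = 0 := by
    rw [show (∫ s in (0:ℝ)..s₀, max (p + s * (q - p)) 0) = ∫ s in (0:ℝ)..s₀, (0:ℝ) from
      integral_congr ?_]
    · simp
    · intro s hs
      rw [Set.uIcc_of_le hs₀0.le] at hs
      have h2 : s ≤ s₀ := hs.2
      have h3 : s * (q - p) ≤ s₀ * (q - p) := mul_le_mul_of_nonneg_right h2 hqp.le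
      rw [hs₀, div_mul_cancel₀ _ hqp.ne'] at h3
      have hx : p + s * (q - p) ≤ 0 := by linarith
      simpa using max_eq_right hx
  have h2 : (∫ s in s₀..1, max (p + s * (q - p)) 0) = ∫ s in s₀..1, (p + s * (q - p)) := by
    apply integral_congr
    intro s hs
    rw [Set.uIcc_of_le hs₀1.le] at hs
    have h3 : s₀ * (q - p) ≤ s * (q - p) := mul_le_mul_of_nonneg_right hs.1 hqp.le
    rw [hs₀, div_mul_cancel₀ _ hqp.ne'] at h3
    have hx : 0 ≤ p + s * (q - p) := by linarith
    exact max_eq_left hx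
  have h3 : (∫ s in s₀..1, (p + s * (q - p))) = p * (1 - s₀) + (q - p) * ((1:ℝ)^2 - s₀^2) / 2 := by
    have hi : IntervalIntegrable (fun s : ℝ => s * (q - p)) volume s₀ 1 :=
      (continuous_id.mul continuous_const).intervalIntegrable _ _
    rw [integral_add intervalIntegrable_const hi, intervalIntegral.integral_mul_const, integral_id]
    norm_num
    ring
  rw [hsplit, h1, h2, h3, hs₀]
  field_simp
  ring

open intervalIntegral in
private lemma edgeMean_split (P Q D n : Fin 2 → ℝ) (r0 r1 bb aj : ℝ) :
    edgeMean P Q (fun x => (r0 * x 0 + r1 * x 1 + bb) + max (dot n (x - D)) 0 * aj)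
      = ((r0 * (P 0 + Q 0) + r1 * (P 1 + Q 1)) / 2 + bb)
        + aj * ∫ s in (0:ℝ)..1,
            max (dot n (P - D) + s * (dot n (Q - D) - dot n (P - D))) 0 := by
  unfold edgeMean
  have hptw : ∀ s : ℝ, (r0 * (P + s • (Q - P)) 0 + r1 * (P + s • (Q - P)) 1 + bb)
      + max (dot n ((P + s • (Q - P)) - D)) 0 * aj
      = ((r0 * P 0 + r1 * P 1 + bb) + s * (r0 * (Q 0 - P 0) + r1 * (Q 1 - P 1)))
        + max (dot n (P - D) + s * (dot n (Q - D) - dot n (P - D))) 0 * aj := by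
    intro s
    have h1 : dot n ((P + s • (Q - P)) - D)
        = dot n (P - D) + s * (dot n (Q - D) - dot n (P - D)) := by
      simp only [dot, Pi.add_apply, Pi.sub_apply, Pi.smul_apply, smul_eq_mul]
      ring
    rw [h1]
    simp only [Pi.add_apply, Pi.smul_apply, Pi.sub_apply, smul_eq_mul]
    ring
  simp only [hptw]
  have hia : IntervalIntegrable
      (fun s : ℝ => (r0 * P 0 + r1 * P 1 + bb) + s * (r0 * (Q 0 - P 0) + r1 * (Q 1 - P 1)))
      volume 0 1 :=
    (continuous_const.add (continuous_id.mul continuous_const)).intervalIntegrable _ _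
  have hib : IntervalIntegrable
      (fun s : ℝ => max (dot n (P - D) + s * (dot n (Q - D) - dot n (P - D))) 0 * aj)
      volume 0 1 :=
    (((continuous_const.add (continuous_id.mul continuous_const)).max
      continuous_const).mul continuous_const).intervalIntegrable _ _
  rw [integral_add hia hib, integral_affine', intervalIntegral.integral_mul_const]
  ring

private lemma cross_ne_zero' (A₁ A₂ A₃ : Fin 2 → ℝ) (h : AffineIndependent ℝ ![A₁, A₂, A₃]) :
    (A₂ 0 - A₁ 0) * (A₃ 1 - A₁ 1) - (A₂ 1 - A₁ 1) * (A₃ 0 - A₁ 0) ≠ 0 := by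
  intro hk
  rw [affineIndependent_iff] at h
  have hdep : ∀ α β : ℝ, α * (A₂ 0 - A₁ 0) + β * (A₃ 0 - A₁ 0) = 0 →
      α * (A₂ 1 - A₁ 1) + β * (A₃ 1 - A₁ 1) = 0 → α = 0 ∧ β = 0 := by
    intro α β h0 h1
    have hs : (Finset.univ : Finset (Fin 3)).sum ![-(α+β), α, β] = 0 := by
      simp [Fin.sum_univ_three]
    have hc : ∑ e ∈ (Finset.univ : Finset (Fin 3)), (![-(α+β), α, β]) e • (![A₁, A₂, A₃]) e = 0 := by
      funext i
      simp only [Fin.sum_univ_three, Matrix.cons_val_zero, Matrix.cons_val_one,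
        Matrix.head_cons, Matrix.cons_val_two, Matrix.tail_cons, Pi.add_apply,
        Pi.smul_apply, smul_eq_mul, Pi.zero_apply]
      fin_cases i
      · simp only [Fin.mk_zero, Fin.mk_one, Fin.isValue]
        linear_combination h0
      · simp only [Fin.mk_zero, Fin.mk_one, Fin.isValue]
        linear_combination h1
    have := h Finset.univ ![-(α+β), α, β] hs hc
    exact ⟨this 1 (Finset.mem_univ _), this 2 (Finset.mem_univ _)⟩
  have h1 := hdep (A₃ 0 - A₁ 0) (-(A₂ 0 - A₁ 0)) (by ring) (by linear_combination -hk)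
  have h2 := hdep (A₃ 1 - A₁ 1) (-(A₂ 1 - A₁ 1)) (by linear_combination hk) (by ring)
  have h3 := hdep 1 0 (by linarith [h1.1]) (by linarith [h2.1])
  exact one_ne_zero h3.1

set_option maxHeartbeats 1000000 in
private lemma core_algebra
    (n0 n1 u0 u1 v0 v1 l1 l2 l3 μp μm a0 a1 M00 M01 M10 M11 qp qm : ℝ)
    (hunit : n0 * n0 + n1 * n1 = 1)
    (hl1 : l1 < 0) (hl2 : l2 < 0) (hl3 : 0 < l3)
    (hpu : n0 * u0 + n1 * u1 = l3 - l1)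
    (hrv : n0 * v0 + n1 * v1 = l3 - l2)
    (hκ : u0 * v1 - u1 * v0 ≠ 0)
    (hμp : 0 < μp) (hμm : 0 < μm)
    (R10 : (M00 * u0 + M01 * u1) * (l3 - l2) = -a0 * l3 ^ 2)
    (R11 : (M10 * u0 + M11 * u1) * (l3 - l2) = -a1 * l3 ^ 2)
    (R20 : (M00 * v0 + M01 * v1) * (l3 - l1) = -a0 * l3 ^ 2)
    (R21 : (M10 * v0 + M11 * v1) * (l3 - l1) = -a1 * l3 ^ 2)
    (htr : a0 * n0 + a1 * n1 = 0)
    (hJ0 : μp * (2 * (M00 + a0 * n0) * n0 + ((M01 + a0 * n1) + (M10 + a1 * n0)) * n1) - qp * n0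
         = μm * (2 * M00 * n0 + (M01 + M10) * n1) - qm * n0)
    (hJ1 : μp * (((M01 + a0 * n1) + (M10 + a1 * n0)) * n0 + 2 * (M11 + a1 * n1) * n1) - qp * n1
         = μm * ((M01 + M10) * n0 + 2 * M11 * n1) - qm * n1) :
    a0 = 0 ∧ a1 = 0 ∧ qp = qm ∧ M00 = 0 ∧ M01 = 0 ∧ M10 = 0 ∧ M11 = 0 := by
  have hp : 0 < l3 - l1 := by linarith
  have hr : 0 < l3 - l2 := by linarith
  have hprl : l3 * l3 < (l3 - l1) * (l3 - l2) :=
    mul_lt_mul'' (by linarith) (by linarith) hl3.le hl3.le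
  have hprpos : 0 < (l3 - l1) * (l3 - l2) := mul_pos hp hr
  have hκpr : (u0 * v1 - u1 * v0) * ((l3 - l1) * (l3 - l2)) ≠ 0 :=
    mul_ne_zero hκ hprpos.ne'
  obtain ⟨α, hαdef⟩ : ∃ x : ℝ, x = (n0 * v1 - n1 * v0) / (u0 * v1 - u1 * v0) := ⟨_, rfl⟩
  obtain ⟨β, hβdef⟩ : ∃ x : ℝ, x = (u0 * n1 - u1 * n0) / (u0 * v1 - u1 * v0) := ⟨_, rfl⟩
  have hdec0 : n0 = α * u0 + β * v0 := by
    rw [hαdef, hβdef]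
    rw [div_mul_eq_mul_div, div_mul_eq_mul_div, ← add_div, eq_div_iff hκ]
    ring
  have hdec1 : n1 = α * u1 + β * v1 := by
    rw [hαdef, hβdef]
    rw [div_mul_eq_mul_div, div_mul_eq_mul_div, ← add_div, eq_div_iff hκ]
    ring
  have hαβ : α * (l3 - l1) + β * (l3 - l2) = 1 := by
    rw [← hpu, ← hrv, ← hunit]
    linear_combination (-n0) * hdec0 + (-n1) * hdec1
  have hM00 : M00 * ((u0 * v1 - u1 * v0) * ((l3 - l1) * (l3 - l2)))
      = -a0 * l3^2 * ((l3 - l1) * v1 - (l3 - l2) * u1) := by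
    linear_combination ((l3 - l1) * v1) * R10 - ((l3 - l2) * u1) * R20
  have hM10 : M10 * ((u0 * v1 - u1 * v0) * ((l3 - l1) * (l3 - l2)))
      = -a1 * l3^2 * ((l3 - l1) * v1 - (l3 - l2) * u1) := by
    linear_combination ((l3 - l1) * v1) * R11 - ((l3 - l2) * u1) * R21
  have hM01 : M01 * ((u0 * v1 - u1 * v0) * ((l3 - l1) * (l3 - l2)))
      = -a0 * l3^2 * ((l3 - l2) * u0 - (l3 - l1) * v0) := by
    linear_combination ((l3 - l2) * u0) * R20 - ((l3 - l1) * v0) * R10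
  have hM11 : M11 * ((u0 * v1 - u1 * v0) * ((l3 - l1) * (l3 - l2)))
      = -a1 * l3^2 * ((l3 - l2) * u0 - (l3 - l1) * v0) := by
    linear_combination ((l3 - l2) * u0) * R21 - ((l3 - l1) * v0) * R11
  have hc0 : (M00 * n0 + M10 * n1) * ((u0 * v1 - u1 * v0) * ((l3 - l1) * (l3 - l2))) = 0 := by
    linear_combination n0 * hM00 + n1 * hM10
      - l3^2 * ((l3 - l1) * v1 - (l3 - l2) * u1) * htr
  have hc1 : (M01 * n0 + M11 * n1) * ((u0 * v1 - u1 * v0) * ((l3 - l1) * (l3 - l2))) = 0 := by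
    linear_combination n0 * hM01 + n1 * hM11
      - l3^2 * ((l3 - l2) * u0 - (l3 - l1) * v0) * htr
  have hc0' : M00 * n0 + M10 * n1 = 0 := by
    rcases mul_eq_zero.mp hc0 with h | h
    · exact h
    · exact absurd h hκpr
  have hc1' : M01 * n0 + M11 * n1 = 0 := by
    rcases mul_eq_zero.mp hc1 with h | h
    · exact h
    · exact absurd h hκpr
  have hr0n : (M00 * n0 + M01 * n1) * ((l3 - l1) * (l3 - l2)) = -a0 * l3^2 := by
    linear_combination ((l3 - l1) * (l3 - l2) * M00) * hdec0
      + ((l3 - l1) * (l3 - l2) * M01) * hdec1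
      + ((l3 - l1) * α) * R10 + ((l3 - l2) * β) * R20 - a0 * l3^2 * hαβ
  have hr1n : (M10 * n0 + M11 * n1) * ((l3 - l1) * (l3 - l2)) = -a1 * l3^2 := by
    linear_combination ((l3 - l1) * (l3 - l2) * M10) * hdec0
      + ((l3 - l1) * (l3 - l2) * M11) * hdec1
      + ((l3 - l1) * α) * R11 + ((l3 - l2) * β) * R21 - a1 * l3^2 * hαβ
  have hprl2 : 0 < (l3 - l1) * (l3 - l2) - l3 ^ 2 := by rw [pow_two]; linarith
  have hK : 0 < μp * ((l3 - l1) * (l3 - l2) - l3^2) + μm * l3^2 :=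
    add_pos (mul_pos hμp hprl2) (mul_pos hμm (pow_pos hl3 2))
  have hE0 : a0 * (μp * ((l3 - l1) * (l3 - l2) - l3^2) + μm * l3^2)
      = (qp - qm) * (n0 * ((l3 - l1) * (l3 - l2))) := by
    linear_combination ((l3 - l1) * (l3 - l2)) * hJ0 - (μp - μm) * hr0n
      - (μp - μm) * ((l3 - l1) * (l3 - l2)) * hc0'
      - μp * ((l3 - l1) * (l3 - l2)) * a0 * hunit
      - μp * ((l3 - l1) * (l3 - l2)) * n0 * htr
  have hE1 : a1 * (μp * ((l3 - l1) * (l3 - l2) - l3^2) + μm * l3^2)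
      = (qp - qm) * (n1 * ((l3 - l1) * (l3 - l2))) := by
    linear_combination ((l3 - l1) * (l3 - l2)) * hJ1 - (μp - μm) * hr1n
      - (μp - μm) * ((l3 - l1) * (l3 - l2)) * hc1'
      - μp * ((l3 - l1) * (l3 - l2)) * a1 * hunit
      - μp * ((l3 - l1) * (l3 - l2)) * n1 * htr
  have hqsum : (qp - qm) * ((l3 - l1) * (l3 - l2)) = 0 := by
    linear_combination (-(n0)) * hE0 - n1 * hE1
      + (μp * ((l3 - l1) * (l3 - l2) - l3^2) + μm * l3^2) * htr
      - (qp - qm) * ((l3 - l1) * (l3 - l2)) * hunit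
  have hq : qp = qm := by
    rcases mul_eq_zero.mp hqsum with h | h
    · linarith [sub_eq_zero.mp h]
    · exact absurd h hprpos.ne'
  have ha0 : a0 = 0 := by
    have h := hE0
    rw [hq] at h
    simp only [sub_self, zero_mul] at h
    rcases mul_eq_zero.mp h with h' | h'
    · exact h'
    · exact absurd h' hK.ne'
  have ha1 : a1 = 0 := by
    have h := hE1
    rw [hq] at h
    simp only [sub_self, zero_mul] at h
    rcases mul_eq_zero.mp h with h' | h'
    · exact h'
    · exact absurd h' hK.ne'
  have hMz : ∀ M W : ℝ, (M * ((u0 * v1 - u1 * v0) * ((l3 - l1) * (l3 - l2))) = 0 * l3^2 * W) → M = 0 := by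
    intro M W hM
    rw [zero_mul, zero_mul] at hM
    rcases mul_eq_zero.mp hM with h | h
    · exact h
    · exact absurd h hκpr
  refine ⟨ha0, ha1, hq, ?_, ?_, ?_, ?_⟩
  · exact hMz _ _ (by linear_combination hM00 - l3^2*((l3 - l1) * v1 - (l3 - l2) * u1) * ha0)
  · exact hMz _ _ (by linear_combination hM01 - l3^2*((l3 - l2) * u0 - (l3 - l1) * v0) * ha0)
  · exact hMz _ _ (by linear_combination hM10 - l3^2*((l3 - l1) * v1 - (l3 - l2) * u1) * ha1)
  · exact hMz _ _ (by linear_combination hM11 - l3^2*((l3 - l2) * u0 - (l3 - l1) * v0) * ha1)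

set_option maxHeartbeats 2000000 in
/-- if all seven degrees of freedom of a local IFE pair vanish, then the
pair vanishes identically: `v⁺ = v⁻ = 0` and `q⁺ = q⁻ = 0`. -/
theorem statement6 (c : CutTriangle) (μp μm : ℝ) (hμp : 0 < μp) (hμm : 0 < μm)
    (Mp Mm : Matrix (Fin 2) (Fin 2) ℝ) (bp bm : Fin 2 → ℝ) (qp qm : ℝ)
    (hIFE : c.IsIFEPair μp μm Mp bp Mm bm qp qm)
    (hdof : c.dof Mp bp Mm bm qp qm = 0) :
    (∀ x : Fin 2 → ℝ, Mp.mulVec x + bp = 0) ∧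
    (∀ x : Fin 2 → ℝ, Mm.mulVec x + bm = 0) ∧ qp = 0 ∧ qm = 0 := by
  obtain ⟨hJ1mat, hJ2, hJ3⟩ := hIFE
  have hu : c.n 0 * c.n 0 + c.n 1 * c.n 1 = 1 := by
    have := c.hn_unit; simpa [dot] using this
  have horth : c.n 0 * (c.E 0 - c.D 0) + c.n 1 * (c.E 1 - c.D 1) = 0 := by
    have := c.hn_orth; simpa [dot] using this
  have hκ : (c.A₂ 0 - c.A₁ 0) * (c.A₃ 1 - c.A₁ 1)
      - (c.A₂ 1 - c.A₁ 1) * (c.A₃ 0 - c.A₁ 0) ≠ 0 :=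
    cross_ne_zero' _ _ _ c.indep
  obtain ⟨da, db, hda, hdb, hdab, hDeq⟩ := c.hD
  obtain ⟨ea, eb, hea, heb, heab, hEeq⟩ := c.hE
  have hD0 : da * c.A₂ 0 + db * c.A₃ 0 = c.D 0 := by
    have := congrFun hDeq 0; simpa using this
  have hD1 : da * c.A₂ 1 + db * c.A₃ 1 = c.D 1 := by
    have := congrFun hDeq 1; simpa using this
  have hE0 : ea * c.A₁ 0 + eb * c.A₃ 0 = c.E 0 := by
    have := congrFun hEeq 0; simpa using this
  have hE1 : ea * c.A₁ 1 + eb * c.A₃ 1 = c.E 1 := by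
    have := congrFun hEeq 1; simpa using this
  obtain ⟨l1, hl1def⟩ : ∃ x : ℝ, x = dot c.n (c.A₁ - c.D) := ⟨_, rfl⟩
  obtain ⟨l2, hl2def⟩ : ∃ x : ℝ, x = dot c.n (c.A₂ - c.D) := ⟨_, rfl⟩
  obtain ⟨l3, hl3def⟩ : ∃ x : ℝ, x = dot c.n (c.A₃ - c.D) := ⟨_, rfl⟩
  have hl3 : 0 < l3 := by rw [hl3def]; exact c.hn_sign
  have hl2 : l2 < 0 := by
    have key : da * l2 + db * l3 = 0 := by
      rw [hl2def, hl3def]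
      simp only [dot, Pi.sub_apply]
      linear_combination c.n 0 * hD0 + c.n 1 * hD1 - (c.n 0 * c.D 0 + c.n 1 * c.D 1) * hdab
    nlinarith [mul_pos hdb hl3]
  have hl1 : l1 < 0 := by
    have key : ea * l1 + eb * l3 = 0 := by
      rw [hl1def, hl3def]
      simp only [dot, Pi.sub_apply]
      linear_combination c.n 0 * hE0 + c.n 1 * hE1 + horth
        - (c.n 0 * c.D 0 + c.n 1 * c.D 1) * heab
    nlinarith [mul_pos heb hl3]
  obtain ⟨τ, hτdef⟩ : ∃ x : ℝ, x = c.n 1 * (c.E 0 - c.D 0) - c.n 0 * (c.E 1 - c.D 1) := ⟨_, rfl⟩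
  have hτ0 : c.E 0 - c.D 0 = τ * c.n 1 := by
    rw [hτdef]; linear_combination c.n 0 * horth - (c.E 0 - c.D 0) * hu
  have hτ1 : c.E 1 - c.D 1 = -(τ * c.n 0) := by
    rw [hτdef]; linear_combination c.n 1 * horth - (c.E 1 - c.D 1) * hu
  have hτne : τ ≠ 0 := by
    intro h0
    rw [h0, zero_mul] at hτ0
    rw [h0, zero_mul, neg_zero] at hτ1
    have hc0 : da * (c.A₂ 0 - c.A₁ 0) + (db - eb) * (c.A₃ 0 - c.A₁ 0) = 0 := by
      linear_combination hD0 - hE0 - hτ0 + c.A₁ 0 * heab - c.A₁ 0 * hdab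
    have hc1 : da * (c.A₂ 1 - c.A₁ 1) + (db - eb) * (c.A₃ 1 - c.A₁ 1) = 0 := by
      linear_combination hD1 - hE1 - hτ1 + c.A₁ 1 * heab - c.A₁ 1 * hdab
    have hk0 : da * ((c.A₂ 0 - c.A₁ 0) * (c.A₃ 1 - c.A₁ 1)
        - (c.A₂ 1 - c.A₁ 1) * (c.A₃ 0 - c.A₁ 0)) = 0 := by
      linear_combination (c.A₃ 1 - c.A₁ 1) * hc0 - (c.A₃ 0 - c.A₁ 0) * hc1
    rcases mul_eq_zero.mp hk0 with h | h
    · exact hda.ne' h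
    · exact hκ h
  have hJ2D := hJ2 c.D (left_mem_segment ℝ c.D c.E)
  have hJ2E := hJ2 c.E (right_mem_segment ℝ c.D c.E)
  obtain ⟨a, hadef⟩ : ∃ a : Fin 2 → ℝ,
      a = fun j => (Mp j 0 - Mm j 0) * c.n 0 + (Mp j 1 - Mm j 1) * c.n 1 := ⟨_, rfl⟩
  have hjump : ∀ j : Fin 2, Mp j 0 = Mm j 0 + a j * c.n 0 ∧ Mp j 1 = Mm j 1 + a j * c.n 1 ∧
      bp j = bm j - a j * (c.n 0 * c.D 0 + c.n 1 * c.D 1) := by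
    intro j
    have hjD := congrFun hJ2D j
    have hjE := congrFun hJ2E j
    simp only [Matrix.mulVec, dotProduct, Fin.sum_univ_two, Pi.add_apply] at hjD hjE
    have hdm : (Mp j 0 - Mm j 0) * (c.E 0 - c.D 0)
        + (Mp j 1 - Mm j 1) * (c.E 1 - c.D 1) = 0 := by
      linear_combination hjE - hjD
    rw [hτ0, hτ1] at hdm
    have h2 : τ * ((Mp j 0 - Mm j 0) * c.n 1 - (Mp j 1 - Mm j 1) * c.n 0) = 0 := by
      linear_combination hdm
    have hrowt : (Mp j 0 - Mm j 0) * c.n 1 - (Mp j 1 - Mm j 1) * c.n 0 = 0 :=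
      (mul_eq_zero.mp h2).resolve_left hτne
    have haj : a j = (Mp j 0 - Mm j 0) * c.n 0 + (Mp j 1 - Mm j 1) * c.n 1 := by rw [hadef]
    have h00 : Mp j 0 = Mm j 0 + a j * c.n 0 := by
      rw [haj]
      linear_combination (-(Mp j 0 - Mm j 0)) * hu + c.n 1 * hrowt
    have h01 : Mp j 1 = Mm j 1 + a j * c.n 1 := by
      rw [haj]
      linear_combination (-(Mp j 1 - Mm j 1)) * hu - c.n 0 * hrowt
    refine ⟨h00, h01, ?_⟩
    linear_combination hjD - c.D 0 * h00 - c.D 1 * h01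
  have hvt : ∀ (j : Fin 2) (x : Fin 2 → ℝ), c.vtilde Mp bp Mm bm x j
      = (Mm j 0 * x 0 + Mm j 1 * x 1 + bm j) + max (dot c.n (x - c.D)) 0 * a j := by
    intro j x
    obtain ⟨h00, h01, hb⟩ := hjump j
    simp only [CutTriangle.vtilde]
    split_ifs with hx
    · rw [max_eq_left hx]
      simp only [Matrix.mulVec, dotProduct, Fin.sum_univ_two, Pi.add_apply]
      have hd : dot c.n (x - c.D) = c.n 0 * (x 0 - c.D 0) + c.n 1 * (x 1 - c.D 1) := by
        simp [dot]
      rw [hd]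
      linear_combination x 0 * h00 + x 1 * h01 + hb
    · rw [max_eq_right (le_of_not_ge hx)]
      simp only [Matrix.mulVec, dotProduct, Fin.sum_univ_two, Pi.add_apply]
      ring
  have hfun0 : (fun x => c.vtilde Mp bp Mm bm x 0)
      = fun x => (Mm 0 0 * x 0 + Mm 0 1 * x 1 + bm 0) + max (dot c.n (x - c.D)) 0 * a 0 :=
    funext fun x => hvt 0 x
  have hfun1 : (fun x => c.vtilde Mp bp Mm bm x 1)
      = fun x => (Mm 1 0 * x 0 + Mm 1 1 * x 1 + bm 1) + max (dot c.n (x - c.D)) 0 * a 1 :=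
    funext fun x => hvt 1 x
  have d0 : edgeMean c.A₂ c.A₃ (fun x => c.vtilde Mp bp Mm bm x 0) = 0 := by
    simpa [CutTriangle.dof] using congrFun hdof 0
  have d1 : edgeMean c.A₁ c.A₃ (fun x => c.vtilde Mp bp Mm bm x 0) = 0 := by
    simpa [CutTriangle.dof] using congrFun hdof 1
  have d2 : edgeMean c.A₁ c.A₂ (fun x => c.vtilde Mp bp Mm bm x 0) = 0 := by
    simpa [CutTriangle.dof] using congrFun hdof 2
  have d3 : edgeMean c.A₂ c.A₃ (fun x => c.vtilde Mp bp Mm bm x 1) = 0 := by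
    simpa [CutTriangle.dof] using congrFun hdof 3
  have d4 : edgeMean c.A₁ c.A₃ (fun x => c.vtilde Mp bp Mm bm x 1) = 0 := by
    simpa [CutTriangle.dof] using congrFun hdof 4
  have d5 : edgeMean c.A₁ c.A₂ (fun x => c.vtilde Mp bp Mm bm x 1) = 0 := by
    simpa [CutTriangle.dof] using congrFun hdof 5
  have d6 : (area c.Tplus * qp + area c.Tminus * qm) / area c.T = 0 := by
    have h := congrFun hdof 6
    simp only [CutTriangle.dof, Pi.zero_apply] at h
    rw [show (6 : Fin 7) = (5 : Fin 6).succ from rfl, Matrix.cons_val_succ] at h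
    rw [show (5 : Fin 6) = (4 : Fin 5).succ from rfl, Matrix.cons_val_succ] at h
    rw [show (4 : Fin 5) = (3 : Fin 4).succ from rfl, Matrix.cons_val_succ] at h
    rw [show (3 : Fin 4) = (2 : Fin 3).succ from rfl, Matrix.cons_val_succ] at h
    rw [show (2 : Fin 3) = (1 : Fin 2).succ from rfl, Matrix.cons_val_succ] at h
    rw [show (1 : Fin 2) = (0 : Fin 1).succ from rfl, Matrix.cons_val_succ] at h
    rwa [Matrix.cons_val_zero] at h
  rw [hfun0, edgeMean_split] at d0 d1 d2
  rw [hfun1, edgeMean_split] at d3 d4 d5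
  rw [← hl2def, ← hl3def] at d0 d3
  rw [← hl1def, ← hl3def] at d1 d4
  rw [← hl1def, ← hl2def] at d2 d5
  rw [integral_max_cross' hl2 hl3] at d0 d3
  rw [integral_max_cross' hl1 hl3] at d1 d4
  rw [integral_max_nonpos' hl1.le hl2.le] at d2 d5
  have hI1 : l3 ^ 2 / (2 * (l3 - l2)) * (2 * (l3 - l2)) = l3 ^ 2 :=
    div_mul_cancel₀ _ (ne_of_gt (by linarith : (0:ℝ) < 2 * (l3 - l2)))
  have hI2 : l3 ^ 2 / (2 * (l3 - l1)) * (2 * (l3 - l1)) = l3 ^ 2 :=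
    div_mul_cancel₀ _ (ne_of_gt (by linarith : (0:ℝ) < 2 * (l3 - l1)))
  have R10 : (Mm 0 0 * (c.A₃ 0 - c.A₁ 0) + Mm 0 1 * (c.A₃ 1 - c.A₁ 1)) * (l3 - l2)
      = -(a 0) * l3 ^ 2 := by
    linear_combination (2*(l3 - l2)) * d0 - (2*(l3 - l2)) * d2 - a 0 * hI1
  have R11 : (Mm 1 0 * (c.A₃ 0 - c.A₁ 0) + Mm 1 1 * (c.A₃ 1 - c.A₁ 1)) * (l3 - l2)
      = -(a 1) * l3 ^ 2 := by
    linear_combination (2*(l3 - l2)) * d3 - (2*(l3 - l2)) * d5 - a 1 * hI1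
  have R20 : (Mm 0 0 * (c.A₃ 0 - c.A₂ 0) + Mm 0 1 * (c.A₃ 1 - c.A₂ 1)) * (l3 - l1)
      = -(a 0) * l3 ^ 2 := by
    linear_combination (2*(l3 - l1)) * d1 - (2*(l3 - l1)) * d2 - a 0 * hI2
  have R21 : (Mm 1 0 * (c.A₃ 0 - c.A₂ 0) + Mm 1 1 * (c.A₃ 1 - c.A₂ 1)) * (l3 - l1)
      = -(a 1) * l3 ^ 2 := by
    linear_combination (2*(l3 - l1)) * d4 - (2*(l3 - l1)) * d5 - a 1 * hI2
  have hpu : c.n 0 * (c.A₃ 0 - c.A₁ 0) + c.n 1 * (c.A₃ 1 - c.A₁ 1) = l3 - l1 := by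
    rw [hl1def, hl3def]; simp only [dot, Pi.sub_apply]; ring
  have hrv : c.n 0 * (c.A₃ 0 - c.A₂ 0) + c.n 1 * (c.A₃ 1 - c.A₂ 1) = l3 - l2 := by
    rw [hl2def, hl3def]; simp only [dot, Pi.sub_apply]; ring
  have hκ2 : (c.A₃ 0 - c.A₁ 0) * (c.A₃ 1 - c.A₂ 1)
      - (c.A₃ 1 - c.A₁ 1) * (c.A₃ 0 - c.A₂ 0) ≠ 0 := by
    intro h; exact hκ (by linear_combination h)
  have htrace := hJ3
  simp only [Matrix.trace, Matrix.diag, Fin.sum_univ_two] at htrace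
  obtain ⟨h000, h001, hb0⟩ := hjump 0
  obtain ⟨h100, h111k, hb1⟩ := hjump 1
  have htr : a 0 * c.n 0 + a 1 * c.n 1 = 0 := by
    linear_combination htrace - h000 - h111k
  have hJ0 := congrFun hJ1mat 0
  have hJ1' := congrFun hJ1mat 1
  simp only [sig, eps, Matrix.mulVec, dotProduct, Fin.sum_univ_two, Matrix.sub_apply,
    Matrix.smul_apply, Matrix.add_apply, Matrix.transpose_apply, Matrix.one_apply,
    smul_eq_mul, if_true, if_false, Fin.isValue, one_ne_zero, zero_ne_one, ite_true,
    ite_false, reduceIte] at hJ0 hJ1'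
  have hJ0c : μp * (2 * (Mm 0 0 + a 0 * c.n 0) * c.n 0
        + ((Mm 0 1 + a 0 * c.n 1) + (Mm 1 0 + a 1 * c.n 0)) * c.n 1) - qp * c.n 0
      = μm * (2 * Mm 0 0 * c.n 0 + (Mm 0 1 + Mm 1 0) * c.n 1) - qm * c.n 0 := by
    linear_combination hJ0 - 2*μp*c.n 0 * h000 - μp*c.n 1 * h001 - μp*c.n 1 * h100
  have hJ1c : μp * (((Mm 0 1 + a 0 * c.n 1) + (Mm 1 0 + a 1 * c.n 0)) * c.n 0
        + 2 * (Mm 1 1 + a 1 * c.n 1) * c.n 1) - qp * c.n 1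
      = μm * ((Mm 0 1 + Mm 1 0) * c.n 0 + 2 * Mm 1 1 * c.n 1) - qm * c.n 1 := by
    linear_combination hJ1' - μp*c.n 0 * h001 - μp*c.n 0 * h100 - 2*μp*c.n 1 * h111k
  obtain ⟨ha0, ha1, hqq, hM00, hM01, hM10, hM11⟩ :=
    core_algebra (c.n 0) (c.n 1) (c.A₃ 0 - c.A₁ 0) (c.A₃ 1 - c.A₁ 1)
      (c.A₃ 0 - c.A₂ 0) (c.A₃ 1 - c.A₂ 1) l1 l2 l3 μp μm (a 0) (a 1)
      (Mm 0 0) (Mm 0 1) (Mm 1 0) (Mm 1 1) qp qm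
      hu hl1 hl2 hl3 hpu hrv hκ2 hμp hμm R10 R11 R20 R21 htr hJ0c hJ1c
  have hbm0 : bm 0 = 0 := by
    linear_combination d2 - ((c.A₁ 0 + c.A₂ 0)/2) * hM00 - ((c.A₁ 1 + c.A₂ 1)/2) * hM01
  have hbm1 : bm 1 = 0 := by
    linear_combination d5 - ((c.A₁ 0 + c.A₂ 0)/2) * hM10 - ((c.A₁ 1 + c.A₂ 1)/2) * hM11
  have hbp0 : bp 0 = 0 := by rw [hb0, hbm0, ha0]; ring
  have hbp1 : bp 1 = 0 := by rw [hb1, hbm1, ha1]; ring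
  have hMp00 : Mp 0 0 = 0 := by rw [h000, hM00, ha0]; ring
  have hMp01 : Mp 0 1 = 0 := by rw [h001, hM01, ha0]; ring
  have hMp10 : Mp 1 0 = 0 := by rw [h100, hM10, ha1]; ring
  have hMp11 : Mp 1 1 = 0 := by rw [h111k, hM11, ha1]; ring
  -- area argument for the pressure
  have hTdef : c.T = convexHull ℝ ({c.A₁, c.A₂, c.A₃} : Set (Fin 2 → ℝ)) := rfl
  have hfinset : ({c.A₁, c.A₂, c.A₃} : Set (Fin 2 → ℝ)).Finite :=
    ((Set.finite_singleton _).insert _).insert _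
  have hcomp : IsCompact c.T := by rw [hTdef]; exact hfinset.isCompact_convexHull (𝕜 := ℝ)
  have hvolT_lt : volume c.T < ⊤ := hcomp.measure_lt_top
  have hspan : affineSpan ℝ ({c.A₁, c.A₂, c.A₃} : Set (Fin 2 → ℝ)) = ⊤ := by
    rw [show ({c.A₁, c.A₂, c.A₃} : Set (Fin 2 → ℝ)) = Set.range ![c.A₁, c.A₂, c.A₃] by
      ext z
      simp [Matrix.range_cons, Matrix.range_empty, or_comm, or_assoc, or_left_comm]]
    rw [c.indep.affineSpan_eq_top_iff_card_eq_finrank_add_one]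
    simp
  have hint : (interior c.T).Nonempty := by
    rw [hTdef, (convex_convexHull ℝ _).interior_nonempty_iff_affineSpan_eq_top,
      affineSpan_convexHull]
    exact hspan
  have hvolpos : 0 < volume c.T := Measure.measure_pos_of_nonempty_interior _ hint
  have hApos : 0 < area c.T := ENNReal.toReal_pos hvolpos.ne' hvolT_lt.ne
  have hsub : c.T ⊆ c.Tplus ∪ c.Tminus := by
    intro x hx
    by_cases hxx : 0 ≤ dot c.n (x - c.D)
    · exact Or.inl ⟨hx, hxx⟩
    · exact Or.inr ⟨hx, le_of_not_ge hxx⟩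
  have hple : volume c.Tplus ≤ volume c.T := measure_mono Set.inter_subset_left
  have hmle : volume c.Tminus ≤ volume c.T := measure_mono Set.inter_subset_left
  have hsum : area c.T ≤ area c.Tplus + area c.Tminus := by
    have h1 : volume c.T ≤ volume c.Tplus + volume c.Tminus :=
      le_trans (measure_mono hsub) (measure_union_le _ _)
    have htop : volume c.Tplus + volume c.Tminus ≠ ⊤ :=
      (ENNReal.add_lt_top.mpr ⟨lt_of_le_of_lt hple hvolT_lt, lt_of_le_of_lt hmle hvolT_lt⟩).ne
    have h2 := ENNReal.toReal_mono htop h1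
    rwa [ENNReal.toReal_add (lt_of_le_of_lt hple hvolT_lt).ne
      (lt_of_le_of_lt hmle hvolT_lt).ne] at h2
  have hq0 : qp = 0 := by
    rw [← hqq] at d6
    rcases div_eq_zero_iff.mp d6 with h | h
    · have h2 : (area c.Tplus + area c.Tminus) * qp = 0 := by linear_combination h
      rcases mul_eq_zero.mp h2 with h3 | h3
      · linarith
      · exact h3
    · linarith
  refine ⟨?_, ?_, hq0, by rw [← hqq]; exact hq0⟩
  · intro x
    funext j
    fin_cases j <;>
      simp [Matrix.mulVec, dotProduct, Fin.sum_univ_two, hMp00, hMp01, hMp10, hMp11,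
        hbp0, hbp1]
  · intro x
    funext j
    fin_cases j <;>
      simp [Matrix.mulVec, dotProduct, Fin.sum_univ_two, hM00, hM01, hM10, hM11,
        hbm0, hbm1]

end StokesIFE
end
end
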